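/- Let A be a finite set with |A| = q ≥ 2, let n ≥ 2, and set Q = q^{q^n}. There exists an n-universal transformation f : A^m → A^m of size m = 2n + 2Q^n whose time satisfies t_f ≤ 2n + Q^n + 1. -/

import Mathlib

/-- The instruction of `A^m` induced by the `i`-th coordinate function of `f`. -/
def instr {A : Type*} {m : ℕ} (f : (Fin m → A) → Fin m → A) (i : Fin m) :
    (Fin m → A) → Fin m → A :=
  fun x => Function.update x i (f x i)

/-- Apply a list of induced instructions of `f`, first element of the list first. -/
def applyInstrs {A : Type*} {m : ℕ} (f : (Fin m → A) → Fin m → A) :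
    List (Fin m) → (Fin m → A) → Fin m → A
  | [], x => x
  | i :: l, x => applyInstrs f l (instr f i x)

/-- Projection of `A^m` onto the first `n` coordinates. -/
def pr {A : Type*} {m n : ℕ} (hmn : n ≤ m) (x : Fin m → A) : Fin n → A :=
  fun i => x (Fin.castLE hmn i)

theorem aux_le (n t : ℕ) : n ≤ 2 * n + t := by omega

/-!
Take registers `input i` (placed first, where `pr` reads them), `copy i`, `counter`, `mark`, and
`table (w, i)` for every word `w ∈ Aⁿ` and coordinate `i`. Identifying `A` with `ZMod q`, the
coordinate functions are `input i := table (copy, i)`, `copy i := input i`,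
`counter := counter + 1`, `mark := counter` and `table p := counter - mark`.
To simulate `g`, copy the inputs; then, for each `p = (w, i)`, set `mark`, tick `counter` exactly
`g w i` times and set `table p`, which now holds `g w i`; finally set every
`input i := table (copy, i)`, which is `g input i`. This takes at most `2n + n qⁿ (q + 1)`
instructions, which is within `2n + Qⁿ + 1` once `n ≥ 2`.
-/

open Function

section Instructions

variable {A : Type*} {m : ℕ} (f : (Fin m → A) → Fin m → A)

theorem applyInstrs_append (l₁ l₂ : List (Fin m)) (x : Fin m → A) :
    applyInstrs f (l₁ ++ l₂) x = applyInstrs f l₂ (applyInstrs f l₁ x) := by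
  induction l₁ generalizing x with
  | nil => rfl
  | cons i l ih => exact ih _

theorem applyInstrs_replicate (k : ℕ) (i : Fin m) (x : Fin m → A) :
    applyInstrs f (List.replicate k i) x = (instr f i)^[k] x := by
  induction k generalizing x with
  | zero => rfl
  | succ k ih => exact ih _

theorem applyInstrs_apply_of_notMem {l : List (Fin m)} {j : Fin m} (hj : j ∉ l)
    (x : Fin m → A) : applyInstrs f l x j = x j := by
  induction l generalizing x with
  | nil => rfl
  | cons i l ih =>
    rw [List.mem_cons, not_or] at hj
    exact (ih hj.2 _).trans (update_of_ne hj.1 _ _)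

theorem applyInstrs_map_apply_of_independent {ι : Type*} (R : ι → Fin m)
    (hR : ∀ i j x a, f (update x (R j) a) (R i) = f x (R i)) {l : List ι} {i : ι} (hi : i ∈ l)
    (x : Fin m → A) : applyInstrs f (l.map R) x (R i) = f x (R i) := by
  induction l generalizing x i with
  | nil => cases hi
  | cons a l ih =>
    rw [List.map_cons, applyInstrs]
    by_cases hl : R i ∈ l.map R
    · obtain ⟨b, hb, hbi⟩ := List.mem_map.1 hl
      rw [← hbi, ih hb, instr, hR]
    · obtain rfl : i = a := (List.mem_cons.1 hi).resolve_right fun h => hl (List.mem_map_of_mem h)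
      rw [applyInstrs_apply_of_notMem _ hl, instr, update_self]

end Instructions

namespace UniversalMachine

abbrev TableIndex (A : Type*) (n : ℕ) := (Fin n → A) × Fin n

inductive Reg (A : Type*) (n : ℕ)
  | input (i : Fin n)
  | copy (i : Fin n)
  | counter
  | mark
  | table (p : TableIndex A n)

variable {A : Type*} [Fintype A] {n m q : ℕ}

noncomputable def Reg.toFin (hm : 2 * n + 2 + Fintype.card (TableIndex A n) ≤ m) :
    Reg A n → Fin m
  | .input i => ⟨i, by omega⟩
  | .copy i => ⟨n + i, by omega⟩
  | .counter => ⟨2 * n, by omega⟩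
  | .mark => ⟨2 * n + 1, by omega⟩
  | .table p => ⟨2 * n + 2 + Fintype.equivFin _ p, by omega⟩

theorem Reg.toFin_injective (hm : 2 * n + 2 + Fintype.card (TableIndex A n) ≤ m) :
    Injective (Reg.toFin hm) := by
  rintro (i | i | _ | _ | p) (j | j | _ | _ | p') h <;>
    simp only [Reg.toFin, Fin.mk.injEq, Fin.val_inj, reduceCtorEq, add_right_inj, Reg.input.injEq,
      Reg.copy.injEq, Reg.table.injEq, (Fintype.equivFin _).injective.eq_iff] at h ⊢ <;>
    omega

def step (e : A ≃ ZMod q) (v : Reg A n → A) : Reg A n → A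
  | .input i => v (.table (fun k => v (.copy k), i))
  | .copy i => v (.input i)
  | .counter => e.symm (e (v .counter) + 1)
  | .mark => v .counter
  | .table _ => e.symm (e (v .counter) - e (v .mark))

noncomputable def machine (hm : 2 * n + 2 + Fintype.card (TableIndex A n) ≤ m) (e : A ≃ ZMod q)
    (s : Fin m → A) : Fin m → A :=
  extend (Reg.toFin hm) (step e (s ∘ Reg.toFin hm)) s

variable (hm : 2 * n + 2 + Fintype.card (TableIndex A n) ≤ m) (e : A ≃ ZMod q)

theorem machine_apply_toFin (s : Fin m → A) (r : Reg A n) :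
    machine hm e s (r.toFin hm) = step e (s ∘ Reg.toFin hm) r :=
  (Reg.toFin_injective hm).extend_apply _ _ _

theorem instr_machine_toFin (r : Reg A n) (s : Fin m → A) :
    instr (machine hm e) (r.toFin hm) s
      = update s (r.toFin hm) (step e (s ∘ Reg.toFin hm) r) := by
  rw [instr, machine_apply_toFin]

noncomputable def copyPhase : List (Fin m) := (List.finRange n).map fun i => (Reg.copy i).toFin hm

noncomputable def segment (g : (Fin n → A) → Fin n → A) (p : TableIndex A n) : List (Fin m) :=
  Reg.mark.toFin hm ::
    (List.replicate (e (g p.1 p.2)).val (Reg.counter.toFin hm) ++ [(Reg.table p).toFin hm])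

noncomputable def tablePhase (g : (Fin n → A) → Fin n → A) : List (Fin m) :=
  (Finset.univ : Finset (TableIndex A n)).toList.flatMap (segment hm e g)

noncomputable def writePhase : List (Fin m) :=
  (List.finRange n).map fun i => (Reg.input i).toFin hm

noncomputable def program (g : (Fin n → A) → Fin n → A) : List (Fin m) :=
  copyPhase hm ++ tablePhase hm e g ++ writePhase hm

theorem applyInstrs_copyPhase_copy (s : Fin m → A) (i : Fin n) :
    applyInstrs (machine hm e) (copyPhase hm) s ((Reg.copy i).toFin hm)
      = s ((Reg.input i).toFin hm) := by
  rw [copyPhase, applyInstrs_map_apply_of_independent _ _ ?_ (List.mem_finRange i),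
    machine_apply_toFin]
  · rfl
  · simp [machine_apply_toFin, step, (Reg.toFin_injective hm).eq_iff]

theorem applyInstrs_writePhase_input (s : Fin m → A) (i : Fin n) :
    applyInstrs (machine hm e) (writePhase hm) s ((Reg.input i).toFin hm)
      = s ((Reg.table (fun k => s ((Reg.copy k).toFin hm), i)).toFin hm) := by
  rw [writePhase, applyInstrs_map_apply_of_independent _ _ ?_ (List.mem_finRange i),
    machine_apply_toFin]
  · rfl
  · simp [machine_apply_toFin, step, (Reg.toFin_injective hm).eq_iff]

theorem iterate_instr_counter (k : ℕ) (s : Fin m → A) :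
    (instr (machine hm e) (Reg.counter.toFin hm))^[k] s
      = update s (Reg.counter.toFin hm) (e.symm (e (s (Reg.counter.toFin hm)) + k)) := by
  induction k with
  | zero => simp
  | succ k ih =>
    rw [iterate_succ_apply', ih, instr_machine_toFin]
    simp [step, add_assoc]

theorem applyInstrs_segment_table [NeZero q] (g : (Fin n → A) → Fin n → A)
    (p : TableIndex A n) (s : Fin m → A) :
    applyInstrs (machine hm e) (segment hm e g p) s ((Reg.table p).toFin hm) = g p.1 p.2 := by
  rw [segment, applyInstrs, applyInstrs_append, applyInstrs_replicate, iterate_instr_counter]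
  simp [applyInstrs, instr_machine_toFin, step, (Reg.toFin_injective hm).eq_iff]

theorem applyInstrs_tablePhase_table [NeZero q] (g : (Fin n → A) → Fin n → A)
    (s : Fin m → A) (p : TableIndex A n) :
    applyInstrs (machine hm e) (tablePhase hm e g) s ((Reg.table p).toFin hm) = g p.1 p.2 := by
  obtain ⟨l₁, l₂, hl⟩ := List.append_of_mem (Finset.mem_toList.2 (Finset.mem_univ p))
  have hp : p ∉ l₂ := by
    have hnodup := Finset.nodup_toList (Finset.univ : Finset (TableIndex A n))
    rw [hl] at hnodup
    exact (List.nodup_cons.1 hnodup.of_append_right).1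
  rw [tablePhase, hl, List.flatMap_append, List.flatMap_cons, applyInstrs_append,
    applyInstrs_append, applyInstrs_apply_of_notMem, applyInstrs_segment_table]
  simpa [segment, (Reg.toFin_injective hm).eq_iff] using hp

theorem applyInstrs_program [NeZero q] (g : (Fin n → A) → Fin n → A) (s : Fin m → A)
    (i : Fin n) :
    applyInstrs (machine hm e) (program hm e g) s ((Reg.input i).toFin hm)
      = g (fun k => s ((Reg.input k).toFin hm)) i := by
  have hcopy : ∀ k, (Reg.copy k).toFin hm ∉ tablePhase hm e g := by
    simp [tablePhase, segment, (Reg.toFin_injective hm).eq_iff]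
  rw [program, applyInstrs_append, applyInstrs_append, applyInstrs_writePhase_input]
  simp only [applyInstrs_apply_of_notMem _ (hcopy _), applyInstrs_copyPhase_copy,
    applyInstrs_tablePhase_table]

theorem length_program_le [NeZero q] (g : (Fin n → A) → Fin n → A) :
    (program hm e g).length ≤ 2 * n + Fintype.card (TableIndex A n) * (q + 1) := by
  have hseg : ∀ p, (segment hm e g p).length ≤ q + 1 := fun p => by
    simp only [segment, List.length_cons, List.length_append, List.length_replicate,
      List.length_nil]
    have := ZMod.val_lt (e (g p.1 p.2))
    omega
  have htable : (tablePhase hm e g).length ≤ Fintype.card (TableIndex A n) * (q + 1) := by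
    rw [tablePhase, List.length_flatMap, Finset.sum_map_toList, Finset.card_univ.symm,
      ← smul_eq_mul]
    exact Finset.sum_le_card_nsmul _ _ _ fun p _ => hseg p
  simp only [program, copyPhase, writePhase, List.length_append, List.length_map,
    List.length_finRange]
  omega

end UniversalMachine

theorem mul_pow_mul_succ_le {q n : ℕ} (hq : 2 ≤ q) (hn : 2 ≤ n) :
    n * q ^ n * (q + 1) ≤ (q ^ q ^ n) ^ n :=
  calc n * q ^ n * (q + 1)
      ≤ q ^ n * q ^ n * q ^ 2 := by
        gcongr
        · exact (Nat.lt_pow_self (by omega)).le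
        · nlinarith
    _ = q ^ (2 * n + 2) := by ring
    _ ≤ q ^ (q ^ n * n) := by
        gcongr
        · omega
        · have : 4 ≤ q ^ n := calc 4 ≤ q ^ 2 := by nlinarith
            _ ≤ q ^ n := Nat.pow_le_pow_right (by omega) (by omega)
          nlinarith
    _ = (q ^ q ^ n) ^ n := pow_mul q (q ^ n) n

/-- With `Q = q^(q^n)`, there is an `n`-universal transformation of size
`m = 2n + 2Q^n` whose time is at most `2n + Q^n + 1`. -/
theorem universal_elementary (q n : ℕ) (hq : 2 ≤ q) (hn : 2 ≤ n)
    (A : Type*) [Fintype A] (hA : Fintype.card A = q) :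
    ∃ f : (Fin (2 * n + 2 * (q ^ q ^ n) ^ n) → A) →
          Fin (2 * n + 2 * (q ^ q ^ n) ^ n) → A,
      ∀ g : (Fin n → A) → Fin n → A,
        ∃ l : List (Fin (2 * n + 2 * (q ^ q ^ n) ^ n)), l ≠ [] ∧
          l.length ≤ 2 * n + (q ^ q ^ n) ^ n + 1 ∧
          ∀ x, g (pr (aux_le n _) x) = pr (aux_le n _) (applyInstrs f l x) := by
  open UniversalMachine in
  have : NeZero q := ⟨by omega⟩
  have hcard : Fintype.card (TableIndex A n) = n * q ^ n := by simp [hA, mul_comm]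
  have hbound := mul_pow_mul_succ_le hq hn
  have hm : 2 * n + 2 + Fintype.card (TableIndex A n) ≤ 2 * n + 2 * (q ^ q ^ n) ^ n := by
    have : 0 < n * q ^ n := by positivity
    rw [hcard]; nlinarith
  let e : A ≃ ZMod q := Fintype.equivOfCardEq (by rw [hA, ZMod.card])
  refine ⟨machine hm e, fun g => ⟨program hm e g, ?_, ?_, fun x => ?_⟩⟩
  · have hmem : (Reg.input ⟨0, by omega⟩).toFin hm ∈ program hm e g := by
      simp [program, writePhase]
    exact List.ne_nil_of_mem hmem
  · have := length_program_le hm e g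
    rw [hcard] at this
    omega
  · funext i
    exact (applyInstrs_program hm e g x i).symm
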